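/- arXiv:1908.02438 — 4 statements merged into one kernel-verified Lean document; each statement's English description precedes it below -/
import Mathlib

section
/- Let ι : A → B be an inclusion of Noetherian integral domains with A integrally closed (normal), such that the induced map Spec(B) → Spec(A) is surjective. If b ∈ B lies in the fraction field of A (i.e., b is in the image of Frac(A) under the induced map on fraction fields), then b ∈ A. -/
/-!
Write `b = a / c`. If `c ∤ a`, pick an associated prime `P = ((c) : e)` of `A ⧸ (c)` containing
`((c) : a)`. Normality of `A` forbids `(e / c) P ⊆ P`, and from `(e / c) P ⊄ P` one reads off that
`P A_P` is principal, so `A_P` is a discrete valuation ring. Since `a / c ∉ A_P`, its inverse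
`c / a = m / s` lies in `P A_P`. Choosing a prime `q` of `B` over `P`, the relation `m b = s` in
`B` puts `s` into `q ∩ A = P`, which is absurd.
-/

open IsLocalRing

theorem IsLocalization.algebraMap_dvd_algebraMap_iff {R : Type*} [CommRing R] (M : Submonoid R)
    (S : Type*) [CommRing S] [Algebra R S] [IsLocalization M S] (a c : R) :
    algebraMap R S c ∣ algebraMap R S a ↔ ∃ m ∈ M, c ∣ m * a := by
  simp only [← Ideal.mem_span_singleton, ← Set.image_singleton, ← Ideal.map_span,
    algebraMap_mem_map_algebraMap_iff M]

theorem Localization.AtPrime.maximalIdeal_eq_span_singleton {A : Type*} [CommRing A]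
    {P : Ideal A} [P.IsPrime] {t y : A} (ht : t ∈ P) (hy : y ∉ P)
    (hP : ∀ m ∈ P, ∃ w, m * y = t * w) :
    maximalIdeal (Localization.AtPrime P) = Ideal.span {algebraMap A _ t} := by
  rw [← Localization.AtPrime.map_eq_maximalIdeal]
  refine le_antisymm (Ideal.map_le_iff_le_comap.mpr fun m hm => ?_) ?_
  · obtain ⟨w, hw⟩ := hP m hm
    have hyu : IsUnit (algebraMap A (Localization.AtPrime P) y) :=
      IsLocalization.map_units _ (⟨y, hy⟩ : P.primeCompl)
    rw [Ideal.mem_comap, Ideal.mem_span_singleton, ← hyu.dvd_mul_right, ← map_mul, hw, map_mul]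
    exact dvd_mul_right _ _
  · rw [Ideal.span_le, Set.singleton_subset_iff]
    exact Ideal.mem_map_of_mem _ ht

theorem exists_isPrime_mem_iff_dvd_mul {A : Type*} [CommRing A] [IsNoetherianRing A] {a c : A}
    (ha : ¬ c ∣ a) :
    ∃ P : Ideal A, P.IsPrime ∧ ∃ e, (∀ r, r ∈ P ↔ c ∣ r * e) ∧ ∀ s, c ∣ s * a → s ∈ P := by
  have mem_colon_iff (r x : A) : r ∈ (⊥ : Submodule A (A ⧸ Ideal.span {c})).colon
      {Ideal.Quotient.mk _ x} ↔ c ∣ r * x := by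
    rw [Submodule.mem_colon_singleton, Submodule.mem_bot, Algebra.smul_def,
      Ideal.Quotient.algebraMap_eq, ← map_mul, Ideal.Quotient.eq_zero_iff_mem,
      Ideal.mem_span_singleton]
  have ha' : Ideal.Quotient.mk (Ideal.span {c}) a ≠ 0 := by
    rwa [Ne, Ideal.Quotient.eq_zero_iff_mem, Ideal.mem_span_singleton]
  obtain ⟨P, hP, hle⟩ := exists_le_isAssociatedPrime_of_isNoetherianRing A _ ha'
  obtain ⟨hP_prime, e', rfl⟩ := isAssociatedPrime_iff.mp hP
  obtain ⟨e, rfl⟩ := Ideal.Quotient.mk_surjective e'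
  exact ⟨_, hP_prime, e, fun r => mem_colon_iff r e,
    fun s hs => hle ((mem_colon_iff s a).mpr hs)⟩

section

variable {A : Type*} [CommRing A] [IsDomain A]

theorem exists_mem_notMem_mul_eq_mul_of_mem_iff_dvd [IsNoetherianRing A] [IsIntegrallyClosed A]
    {P : Ideal A} (hP_ne_top : P ≠ ⊤) {c e : A} (hc : c ≠ 0)
    (hP : ∀ r, r ∈ P ↔ c ∣ r * e) : ∃ t ∈ P, ∃ y ∉ P, y * c = t * e := by
  by_contra! h
  let K := FractionRing A
  have hcK : algebraMap A K c ≠ 0 := IsFractionRing.to_map_ne_zero_of_mem_nonZeroDivisors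
    (mem_nonZeroDivisors_of_ne_zero hc)
  let N := (P.restrictScalars A).map (Algebra.linearMap A K)
  have hcN : algebraMap A K c ∈ N := Submodule.mem_map_of_mem ((hP c).mpr (dvd_mul_right c e))
  have hN : N ≠ ⊥ := fun hN => hcK (by simpa [hN] using hcN)
  have hstable : ∀ n ∈ N, (algebraMap A K e / algebraMap A K c) • n ∈ N := by
    rintro _ ⟨t, ht, rfl⟩
    obtain ⟨y, hy⟩ := (hP t).mp ht
    have hyP : y ∈ P := by_contra fun hyP => h t ht y hyP (by rw [hy, mul_comm])
    refine ⟨y, hyP, ?_⟩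
    simp only [Algebra.linearMap_apply, smul_eq_mul]
    rw [div_mul_eq_mul_div, eq_div_iff hcK, ← map_mul, ← map_mul, mul_comm e, hy, mul_comm]
  obtain ⟨d, hd⟩ := IsIntegrallyClosed.isIntegral_iff.mp
    (isIntegral_of_smul_mem_submodule N hN ((IsNoetherian.noetherian P).map _) _ hstable)
  refine hP_ne_top ((P.eq_top_iff_one).mpr ((hP 1).mpr ⟨d, ?_⟩))
  apply IsFractionRing.injective A K
  rw [one_mul, map_mul, hd, mul_div_cancel₀ _ hcK]

theorem exists_mem_notMem_mul_eq_mul_of_valuationRing {P : Ideal A} [P.IsPrime]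
    [ValuationRing (Localization.AtPrime P)] {a c : A} (ha : ∀ s ∉ P, ¬ c ∣ s * a) :
    ∃ m ∈ P, ∃ s ∉ P, m * a = s * c := by
  let f := algebraMap A (Localization.AtPrime P)
  have hndvd : ¬ f c ∣ f a := by
    rw [IsLocalization.algebraMap_dvd_algebraMap_iff P.primeCompl (Localization.AtPrime P)]
    rintro ⟨s, hs, hsa⟩
    exact ha s hs hsa
  obtain hca | ⟨z, hz⟩ := ValuationRing.dvd_total (f c) (f a)
  · exact absurd hca hndvd
  have hz_mem : z ∈ maximalIdeal (Localization.AtPrime P) := fun hz_unit =>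
    hndvd (hz ▸ hz_unit.mul_right_dvd.mpr dvd_rfl)
  rw [← Localization.AtPrime.map_eq_maximalIdeal, IsLocalization.mem_map_algebraMap_iff
    P.primeCompl] at hz_mem
  obtain ⟨⟨⟨m, hm⟩, s⟩, hms⟩ := hz_mem
  refine ⟨m, hm, s, s.2,
    IsLocalization.injective (Localization.AtPrime P) P.primeCompl_le_nonZeroDivisors ?_⟩
  change f (m * a) = f (s * c)
  rw [map_mul, map_mul, ← hms, hz]
  ring

theorem exists_isPrime_mem_notMem_mul_eq_mul [IsNoetherianRing A] [IsIntegrallyClosed A]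
    {a c : A} (hc : c ≠ 0) (ha : ¬ c ∣ a) :
    ∃ P : Ideal A, P.IsPrime ∧ ∃ m ∈ P, ∃ s ∉ P, m * a = s * c := by
  obtain ⟨P, hP, e, hPe, hle⟩ := exists_isPrime_mem_iff_dvd_mul ha
  obtain ⟨t, ht, y, hy, hyt⟩ := exists_mem_notMem_mul_eq_mul_of_mem_iff_dvd hP.ne_top hc hPe
  have hP_principal : ∀ m ∈ P, ∃ w, m * y = t * w := fun m hm => by
    obtain ⟨w, hw⟩ := (hPe m).mp hm
    exact ⟨w, mul_right_cancel₀ hc (by linear_combination m * hyt + t * hw)⟩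
  have : (maximalIdeal (Localization.AtPrime P)).IsPrincipal :=
    ⟨⟨_, Localization.AtPrime.maximalIdeal_eq_span_singleton ht hy hP_principal⟩⟩
  have : ValuationRing (Localization.AtPrime P) :=
    ((tfae_of_isNoetherianRing_of_isLocalRing_of_isDomain _).out 4 1).mp this
  exact ⟨P, hP, exists_mem_notMem_mul_eq_mul_of_valuationRing fun s hs hsa => hs (hle s hsa)⟩

end

theorem stmt0_general (A B : Type*) [CommRing A] [CommRing B] [IsDomain A] [IsDomain B]
    [IsNoetherianRing A] [Algebra A B]
    (hinj : Function.Injective (algebraMap A B))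
    (hIC : IsIntegrallyClosed A)
    (hsurj : ∀ p : Ideal A, p.IsPrime → ∃ q : Ideal B, q.IsPrime ∧ q.comap (algebraMap A B) = p)
    (b : B) (a c : A) (hc : c ≠ 0) (hb : algebraMap A B c * b = algebraMap A B a) :
    b ∈ (algebraMap A B).range := by
  have hcB : algebraMap A B c ≠ 0 := (map_ne_zero_iff _ hinj).mpr hc
  by_cases hca : c ∣ a
  · obtain ⟨d, rfl⟩ := hca
    exact ⟨d, mul_left_cancel₀ hcB (by rw [hb, map_mul])⟩
  obtain ⟨P, hP, m, hm, s, hs, hms⟩ := exists_isPrime_mem_notMem_mul_eq_mul hc hca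
  obtain ⟨q, -, rfl⟩ := hsurj P hP
  have hms' : algebraMap A B m * algebraMap A B a = algebraMap A B s * algebraMap A B c := by
    rw [← map_mul, hms, map_mul]
  have hmb : algebraMap A B m * b = algebraMap A B s :=
    mul_left_cancel₀ hcB (by linear_combination algebraMap A B m * hb + hms')
  exact (hs (by rw [Ideal.mem_comap, ← hmb]; exact q.mul_mem_right b hm)).elim

/-- Let `ι : A → B` be an inclusion of Noetherian integral domains with `A`
integrally closed (normal), such that the induced map `Spec B → Spec A` is surjective
(every prime of `A` is the contraction of a prime of `B`).  If `b ∈ B` lies in the fraction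
field of `A` (i.e. `c • b = a` in `B` for some `a c : A` with `c ≠ 0`), then `b` lies in
the image of `A`. -/
theorem stmt0 (A B : Type*) [CommRing A] [CommRing B] [IsDomain A] [IsDomain B]
    [IsNoetherianRing A] [IsNoetherianRing B] [Algebra A B]
    (hinj : Function.Injective (algebraMap A B))
    (hIC : IsIntegrallyClosed A)
    (hsurj : ∀ p : Ideal A, p.IsPrime → ∃ q : Ideal B, q.IsPrime ∧ q.comap (algebraMap A B) = p)
    (b : B) (a c : A) (hc : c ≠ 0) (hb : algebraMap A B c * b = algebraMap A B a) :
    b ∈ (algebraMap A B).range :=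
  stmt0_general A B hinj hIC hsurj b a c hc hb
end

section
/- Let k be a field of characteristic p > 0, B = k[x]/(x^{p^n}), and A ⊆ B a k-subalgebra with maximal ideal m_A ≠ 0. Let r be the smallest integer such that m_A contains an element a with a ∈ m_B^r \ m_B^{r+1}. If B is free as an A-module, then p^n ≤ r · dim_k(A). -/
/-!
Let `(b_i)` be a basis of `B` over `A` and `a ∈ m_A`. The images of the `b_i` in `B/aB` are
`k`-linearly independent: a relation `∑ c_i b_i ∈ aB` with `c_i ∈ k` gives `c_i ∈ aA` in
coordinates, which is impossible for `c_i ≠ 0` as `a` is not a unit. Since `a` is `x^r` times a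
unit, `B/aB = B/(x^r)` has dimension at most `r`, so `rank_A B ≤ r` and
`p^n = dim_k A · rank_A B ≤ r · dim_k A`.
-/

open Polynomial

section

variable {k : Type*} [Field k]

section Generated

variable {W : Type*} [CommRing W] [Algebra k W] {w : W}

theorem aeval_mk_surjective (hw : Function.Surjective (aeval (R := k) w)) (I : Ideal W) :
    Function.Surjective (aeval (R := k) (Ideal.Quotient.mk I w)) := by
  rw [← Ideal.Quotient.mkₐ_eq_mk k, aeval_algHom]
  exact (Ideal.Quotient.mkₐ_surjective k I).comp hw

theorem finrank_le_of_aeval_surjective_of_pow_eq_zero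
    (hw : Function.Surjective (aeval (R := k) w)) {r : ℕ} (hr : w ^ r = 0) :
    Module.finrank k W ≤ r := by
  have : Module.Finite k (k[X] ⧸ Ideal.span {(X : k[X]) ^ r}) :=
    (monic_X_pow r).finite_adjoinRoot
  let f := Ideal.Quotient.liftₐ (Ideal.span {(X : k[X]) ^ r}) (aeval w) fun g hg => by
    obtain ⟨q, rfl⟩ := Ideal.mem_span_singleton'.mp hg
    simp [hr]
  have hf : Function.Surjective f := fun v => by
    obtain ⟨g, rfl⟩ := hw v
    exact ⟨Ideal.Quotient.mk _ g, rfl⟩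
  calc Module.finrank k W
      ≤ Module.finrank k (k[X] ⧸ Ideal.span {(X : k[X]) ^ r}) :=
        LinearMap.finrank_le_finrank_of_surjective (f := f.toLinearMap) hf
    _ = r := by rw [finrank_quotient_span_eq_natDegree, natDegree_X_pow]

theorem isUnit_or_dvd_of_aeval_surjective (hw : Function.Surjective (aeval (R := k) w))
    (hnil : IsNilpotent w) (v : W) : IsUnit v ∨ w ∣ v := by
  obtain ⟨g, rfl⟩ := hw v
  have hg : aeval w g = w * aeval w g.divX + algebraMap k W (g.coeff 0) := by
    conv_lhs => rw [← g.X_mul_divX_add]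
    rw [map_add, map_mul, aeval_X, aeval_C]
  rcases eq_or_ne (g.coeff 0) 0 with h0 | h0
  · exact Or.inr ⟨_, by rw [hg, h0, map_zero, add_zero]⟩
  · rw [hg]
    exact Or.inl <| ((Commute.all _ _).isNilpotent_mul_right hnil).isUnit_add_right_of_commute
      ((IsUnit.mk0 _ h0).map (algebraMap k W)) (Commute.all _ _)

end Generated

theorem pow_mem_span_singleton_of_mem_pow_of_notMem_pow_succ {R : Type*} [CommRing R] {x a : R}
    (hx : ∀ v : R, IsUnit v ∨ x ∣ v) {r : ℕ} (ha : a ∈ Ideal.span {x} ^ r)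
    (ha' : a ∉ Ideal.span {x} ^ (r + 1)) :
    x ^ r ∈ Ideal.span {a} := by
  rw [Ideal.span_singleton_pow, Ideal.mem_span_singleton'] at ha
  obtain ⟨v, rfl⟩ := ha
  rcases hx v with ⟨u, rfl⟩ | ⟨w, rfl⟩
  · exact Ideal.mem_span_singleton'.mpr ⟨↑u⁻¹, u.inv_mul_cancel_left _⟩
  · exact absurd (Ideal.span_singleton_pow x (r + 1) ▸
      Ideal.mem_span_singleton'.mpr ⟨w, by ring⟩) ha'

theorem finrank_le_finrank_quotient_span_of_not_isUnit {A B : Type*} [CommRing A] [CommRing B]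
    [Algebra k A] [Algebra k B] [Algebra A B] [IsScalarTower k A B] [Module.Finite k B]
    [Module.Free A B] {a : A} (ha : ¬IsUnit a) :
    Module.finrank A B ≤ Module.finrank k (B ⧸ Ideal.span {algebraMap A B a}) := by
  rcases subsingleton_or_nontrivial A with _ | _
  · exact absurd (isUnit_of_subsingleton a) ha
  have : Module.Finite A B := Module.Finite.of_restrictScalars_finite k A B
  let b := Module.Free.chooseBasis A B
  have hli : LinearIndependent k
      fun i => Ideal.Quotient.mk (Ideal.span {algebraMap A B a}) (b i) := by
    rw [Fintype.linearIndependent_iff]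
    intro c hc i
    have hmem : ∑ j, c j • b j ∈ Ideal.span {algebraMap A B a} := by
      rw [← Ideal.Quotient.eq_zero_iff_mem, ← Ideal.Quotient.mkₐ_eq_mk k, map_sum]
      simpa only [map_smul, Ideal.Quotient.mkₐ_eq_mk] using hc
    obtain ⟨y, hy⟩ := Ideal.mem_span_singleton'.mp hmem
    have hci : algebraMap k A (c i) = a * b.repr y i := calc
      algebraMap k A (c i) = b.repr (∑ j, algebraMap k A (c j) • b j) i := by
        rw [b.repr_sum_self]
      _ = b.repr (a • y) i := by
        rw [Algebra.smul_def, mul_comm, hy]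
        simp only [algebraMap_smul]
      _ = a * b.repr y i := by rw [map_smul]; rfl
    by_contra hc0
    exact ha (isUnit_of_mul_isUnit_left (hci ▸ (IsUnit.mk0 _ hc0).map (algebraMap k A)))
  rw [Module.finrank_eq_card_chooseBasisIndex]
  exact hli.fintype_card_le_finrank

local notation "𝔹" m => Polynomial k ⧸ Ideal.span {(X : Polynomial k) ^ m}

theorem aeval_mk_X_surjective (I : Ideal k[X]) :
    Function.Surjective (aeval (R := k) (Ideal.Quotient.mk I X)) :=
  aeval_mk_surjective (fun g => ⟨g, aeval_X_left_apply g⟩) I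

theorem le_mul_finrank_of_free_of_pow_mem_span {m r : ℕ} (A : Subalgebra k (𝔹 m))
    [Module.Free A (𝔹 m)] {a : 𝔹 m} (haA : a ∈ A) (hnil : IsNilpotent a)
    (hr : Ideal.Quotient.mk _ X ^ r ∈ Ideal.span {a}) :
    m ≤ r * Module.finrank k A := by
  rcases m.eq_zero_or_pos with rfl | hm
  · exact Nat.zero_le _
  have : Nontrivial (𝔹 m) := by
    rw [Ideal.Quotient.nontrivial_iff, Ne, Ideal.span_singleton_eq_top]
    exact not_isUnit_of_natDegree_pos _ (by simpa using hm)
  have : Module.Finite k (𝔹 m) := (monic_X_pow m).finite_adjoinRoot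
  have ha : ¬IsUnit (⟨a, haA⟩ : A) := fun h => hnil.not_isUnit (h.map A.val)
  have hquot : Module.finrank k ((𝔹 m) ⧸ Ideal.span {a}) ≤ r := by
    refine finrank_le_of_aeval_surjective_of_pow_eq_zero
      (aeval_mk_surjective (aeval_mk_X_surjective _) _) ?_
    rwa [← map_pow, Ideal.Quotient.eq_zero_iff_mem]
  calc m = Module.finrank k (𝔹 m) := by
        rw [finrank_quotient_span_eq_natDegree, natDegree_X_pow]
    _ = Module.finrank k A * Module.finrank A (𝔹 m) := (Module.finrank_mul_finrank k A _).symm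
    _ ≤ Module.finrank k A * r := Nat.mul_le_mul_left _
          ((finrank_le_finrank_quotient_span_of_not_isUnit (B := 𝔹 m) ha).trans hquot)
    _ = r * Module.finrank k A := Nat.mul_comm _ _

end

theorem stmt4_general (k : Type*) [Field k] (p : ℕ) (n : ℕ)
    (A : Subalgebra k (Polynomial k ⧸ Ideal.span {(X : Polynomial k) ^ p ^ n}))
    (hfree : Module.Free A (Polynomial k ⧸ Ideal.span {(X : Polynomial k) ^ p ^ n}))
    (mB : Ideal (Polynomial k ⧸ Ideal.span {(X : Polynomial k) ^ p ^ n}))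
    (hmB : mB = Ideal.span
      {Ideal.Quotient.mk (Ideal.span {(X : Polynomial k) ^ p ^ n}) X})
    (r : ℕ) (a : Polynomial k ⧸ Ideal.span {(X : Polynomial k) ^ p ^ n})
    -- `a` is an element of `m_A = A ∩ m_B` lying in `m_B^r \ m_B^{r+1}`
    (haA : a ∈ A) (haB : a ∈ mB) (har : a ∈ mB ^ r) (har' : a ∉ mB ^ (r + 1)) :
    p ^ n ≤ r * Module.finrank k A := by
  subst hmB
  set x := Ideal.Quotient.mk (Ideal.span {(X : k[X]) ^ p ^ n}) X
  have hxnil : IsNilpotent x :=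
    ⟨p ^ n, by rw [← map_pow, Ideal.Quotient.eq_zero_iff_mem]; exact Ideal.mem_span_singleton_self _⟩
  have hxr : x ^ r ∈ Ideal.span {a} := pow_mem_span_singleton_of_mem_pow_of_notMem_pow_succ
    (isUnit_or_dvd_of_aeval_surjective (aeval_mk_X_surjective _) hxnil) har har'
  obtain ⟨c, rfl⟩ := Ideal.mem_span_singleton'.mp haB
  exact le_mul_finrank_of_free_of_pow_mem_span A haA
    ((Commute.all _ _).isNilpotent_mul_left hxnil) hxr

/-- Let `k` be a field of characteristic `p > 0`, `B = k[x]/(x^{p^n})` with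
maximal ideal `m_B = (x)`, and `A ⊆ B` a `k`-subalgebra with nonzero maximal ideal
`m_A = A ∩ m_B`.  Let `r` be the smallest integer such that `m_A` contains an element
`a ∈ m_B^r \ m_B^{r+1}`.  If `B` is free as an `A`-module, then `p^n ≤ r * dim_k A`. -/
theorem stmt4 (k : Type*) [Field k] (p : ℕ) [Fact p.Prime] [CharP k p] (n : ℕ)
    (A : Subalgebra k (Polynomial k ⧸ Ideal.span {(X : Polynomial k) ^ p ^ n}))
    (hfree : Module.Free A (Polynomial k ⧸ Ideal.span {(X : Polynomial k) ^ p ^ n}))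
    (mB : Ideal (Polynomial k ⧸ Ideal.span {(X : Polynomial k) ^ p ^ n}))
    (hmB : mB = Ideal.span
      {Ideal.Quotient.mk (Ideal.span {(X : Polynomial k) ^ p ^ n}) X})
    (r : ℕ) (a : Polynomial k ⧸ Ideal.span {(X : Polynomial k) ^ p ^ n})
    -- `a` is an element of `m_A = A ∩ m_B` lying in `m_B^r \ m_B^{r+1}`
    (haA : a ∈ A) (haB : a ∈ mB) (har : a ∈ mB ^ r) (har' : a ∉ mB ^ (r + 1))
    -- minimality of `r`
    (hmin : ∀ r' < r, ¬ ∃ a' , a' ∈ A ∧ a' ∈ mB ∧ a' ∈ mB ^ r' ∧ a' ∉ mB ^ (r' + 1)) :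
    p ^ n ≤ r * Module.finrank k A :=
  stmt4_general k p n A hfree mB hmB r a haA haB har har'
end

section
/- Let k be a field and G a nontrivial finite commutative group scheme over k of multiplicative type whose Cartier dual is cyclic (i.e., G is a form of μ_n). If G embeds as a closed subgroup scheme of the diagonal torus of GL₂ with trivial intersection with the center of GL₂, and G has order at least 2, then the normalizer of G in GL₂ is the diagonal maximal torus together with possibly the permutation of the two coordinates; in particular if G is not stable under the coordinate swap then the normalizer is the diagonal torus T'. -/
/-!
Let `u = diag(α, β) ∈ GL₂(A)` be the image of the universal point of `G = Spec A`; `α ≠ β`,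
since `G` is nontrivial and meets the centre trivially. Let `g` normalize `G`. Over `R ⊗ A`,
conjugation by `g` maps `u` to a diagonal point `y` of `G`, and comparing `y g = g u` entrywise
gives `y_ii g_ij = g_ij u_jj`. If `g_01` or `g_10` is a unit, traces give `y = diag(β, α)`;
then `u y = αβ · 1` is a central point of `G`, so `αβ = 1` and `G` is stable under the swap.
Over a field this leaves only `g` diagonal or antidiagonal: a nonzero `g_ii` would give
`y_ii = u_ii`, i.e. `α = β`. In general, if `G` is not swap-stable then `g_01` becomes a unit in
no nontrivial ring, hence is nilpotent, so the diagonal entries of `g` are units; then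
`g_ij ⊗ (α - β) = 0` for `i ≠ j`, and `g_ij = 0` because `α - β ≠ 0` in the `k`-vector space `A`.
-/

open Matrix
open scoped TensorProduct

set_option synthInstance.maxHeartbeats 1000000
set_option maxHeartbeats 1000000

/-- The coordinate-swap (Weyl group) element of `GL₂(R)`. -/
noncomputable def swapGL (R : Type) [CommRing R] : GL (Fin 2) R :=
  ⟨!![0, 1; 1, 0], !![0, 1; 1, 0],
    by ext i j; fin_cases i <;> fin_cases j <;> simp [Matrix.mul_apply, Fin.sum_univ_two],
    by ext i j; fin_cases i <;> fin_cases j <;> simp [Matrix.mul_apply, Fin.sum_univ_two]⟩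

/-- The central subgroup of scalar matrices in `GL₂(R)`. -/
def scalarSubgroup (R : Type) [CommRing R] : Subgroup (GL (Fin 2) R) :=
  (Units.map ((Matrix.scalar (Fin 2)) : R →+* Matrix (Fin 2) (Fin 2) R).toMonoidHom).range

namespace Matrix

variable {n : Type*} [Fintype n] [DecidableEq n]

theorem isDiag_mul_apply {α : Type*} [NonUnitalNonAssocSemiring α] {A : Matrix n n α}
    (hA : A.IsDiag) (B : Matrix n n α) (i j : n) :
    (A * B) i j = A i i * B i j := by
  conv_lhs => rw [← hA.diagonal_diag]
  rw [diagonal_mul, diag_apply]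

theorem mul_isDiag_apply {α : Type*} [NonUnitalNonAssocSemiring α] {B : Matrix n n α}
    (hB : B.IsDiag) (A : Matrix n n α) (i j : n) :
    (A * B) i j = A i j * B j j := by
  conv_lhs => rw [← hB.diagonal_diag]
  rw [mul_diagonal, diag_apply]

theorem isDiag_fin_two_iff {α : Type*} [Zero α] {A : Matrix (Fin 2) (Fin 2) α} :
    A.IsDiag ↔ A 0 1 = 0 ∧ A 1 0 = 0 := by
  refine ⟨fun h => ⟨h zero_ne_one, h one_ne_zero⟩, fun ⟨h01, h10⟩ i j hij => ?_⟩
  fin_cases i <;> fin_cases j <;> first | exact absurd rfl hij | assumption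

namespace GeneralLinearGroup

variable {S : Type*} [CommRing S]

section

variable (g x : GL n S) (hx : (x : Matrix n n S).IsDiag)
  (hy : ((g * x * g⁻¹ : GL n S) : Matrix n n S).IsDiag)
include hx hy

theorem conj_apply_mul_eq_mul_apply (i j : n) : (g * x * g⁻¹) i i * g i j = g i j * x j j := by
  have h : ((g * x * g⁻¹ * g : GL n S) : Matrix n n S) = ((g * x : GL n S) : Matrix n n S) := by
    rw [inv_mul_cancel_right]
  rw [← isDiag_mul_apply hy, ← mul_isDiag_apply hx]
  exact congrFun (congrFun h i) j

theorem conj_apply_self_of_isUnit {i : n} (hgi : IsUnit (g i i)) : (g * x * g⁻¹) i i = x i i :=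
  hgi.mul_left_cancel (by rw [mul_comm (g i i)]; exact conj_apply_mul_eq_mul_apply g x hx hy i i)

theorem mul_apply_sub_eq_zero_of_isUnit {i : n} (hgi : IsUnit (g i i)) (j : n) :
    g i j * (x i i - x j j) = 0 := by
  have h := conj_apply_mul_eq_mul_apply g x hx hy i j
  rw [conj_apply_self_of_isUnit g x hx hy hgi] at h
  linear_combination h

end

theorem conj_apply_eq_swap {g x : GL (Fin 2) S} (hx : (x : Matrix (Fin 2) (Fin 2) S).IsDiag)
    (hy : ((g * x * g⁻¹ : GL (Fin 2) S) : Matrix (Fin 2) (Fin 2) S).IsDiag)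
    (hg : IsUnit (g 0 1) ∨ IsUnit (g 1 0)) :
    (g * x * g⁻¹) 0 0 = x 1 1 ∧ (g * x * g⁻¹) 1 1 = x 0 0 := by
  have htrace : (g * x * g⁻¹) 0 0 + (g * x * g⁻¹) 1 1 = x 0 0 + x 1 1 := by
    simpa [trace_fin_two] using trace_units_conj g x
  rcases hg with h | h
  · have h00 : (g * x * g⁻¹) 0 0 = x 1 1 :=
      h.mul_left_cancel (by rw [mul_comm (g 0 1)]; exact conj_apply_mul_eq_mul_apply g x hx hy 0 1)
    exact ⟨h00, by linear_combination htrace - h00⟩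
  · have h11 : (g * x * g⁻¹) 1 1 = x 0 0 :=
      h.mul_left_cancel (by rw [mul_comm (g 1 0)]; exact conj_apply_mul_eq_mul_apply g x hx hy 1 0)
    exact ⟨by linear_combination htrace - h11, h11⟩

section

variable {S : Type} [CommRing S]

theorem mem_scalarSubgroup {u : GL (Fin 2) S} (hu : (u : Matrix (Fin 2) (Fin 2) S).IsDiag)
    (h : u 0 0 = u 1 1) : u ∈ scalarSubgroup S := by
  change u ∈ (scalar (Fin 2)).range
  rw [← center_eq_range_scalar, mem_center_iff_val_mem_range_scalar]
  refine ⟨u 0 0, ?_⟩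
  ext i j
  fin_cases i <;> fin_cases j
  · simp
  · simpa using (hu zero_ne_one).symm
  · simpa using (hu one_ne_zero).symm
  · simpa using h

theorem swapGL_conj {x : GL (Fin 2) S} (hx : (x : Matrix (Fin 2) (Fin 2) S).IsDiag)
    (h : x 0 0 * x 1 1 = 1) : swapGL S * x * (swapGL S)⁻¹ = x⁻¹ := by
  refine eq_inv_of_mul_eq_one_right (Units.ext ?_)
  have hswap : ((swapGL S)⁻¹ : GL (Fin 2) S) = swapGL S := rfl
  rw [Units.val_mul, Units.val_mul, Units.val_mul, hswap, Units.val_one,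
    eta_fin_two (x : Matrix (Fin 2) (Fin 2) S), hx zero_ne_one, hx one_ne_zero]
  simp [swapGL, one_fin_two, mul_comm, h]

end

theorem isUnit_apply_self_of_isNilpotent {g : GL (Fin 2) S} (h : IsNilpotent (g 0 1)) :
    IsUnit (g 0 0) ∧ IsUnit (g 1 1) := by
  have hdet : IsUnit (g 0 0 * g 1 1 - g 0 1 * g 1 0) := by
    rw [← det_fin_two]; exact (isUnit_iff_isUnit_det _).mp g.isUnit
  have hdiag : IsUnit (g 0 0 * g 1 1) := by
    rw [show g 0 0 * g 1 1 = (g 0 0 * g 1 1 - g 0 1 * g 1 0) + g 0 1 * g 1 0 by ring]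
    exact ((Commute.all _ (g 1 0)).isNilpotent_mul_right h).isUnit_add_left_of_commute hdet
      (Commute.all _ _)
  exact ⟨isUnit_of_mul_isUnit_left hdiag, isUnit_of_mul_isUnit_right hdiag⟩

end GeneralLinearGroup
end Matrix

theorem TensorProduct.eq_zero_of_tmul_eq_zero {k R V : Type*} [Field k] [AddCommGroup R]
    [Module k R] [AddCommGroup V] [Module k V] {r : R} {v : V} (hv : v ≠ 0)
    (h : r ⊗ₜ[k] v = 0) : r = 0 := by
  obtain ⟨φ, hφ⟩ : ∃ φ : Module.Dual k V, φ v ≠ 0 := by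
    by_contra! hφ
    exact hv ((Module.forall_dual_apply_eq_zero_iff k v).mp hφ)
  have h' := congrArg ((TensorProduct.rid k R).toLinearMap ∘ₗ φ.lTensor R) h
  simpa [hφ] using h'

theorem exists_algHom_isUnit_of_not_isNilpotent {k R : Type} [CommSemiring k] [CommRing R]
    [Algebra k R] {r : R} (hr : ¬IsNilpotent r) :
    ∃ (R' : Type) (_ : CommRing R') (_ : Algebra k R'), Nontrivial R' ∧
      ∃ f : R →ₐ[k] R', IsUnit (f r) := by
  refine ⟨Localization.Away r, inferInstance, inferInstance, ?_,
    IsScalarTower.toAlgHom k R _, IsLocalization.Away.algebraMap_isUnit r⟩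
  rw [← not_subsingleton_iff_nontrivial, IsLocalization.subsingleton_iff (M := Submonoid.powers r)]
  exact hr

open Matrix.GeneralLinearGroup Algebra.TensorProduct

section GroupFunctor

variable {k : Type} [Field k] {A : Type} [CommRing A] [Algebra k A]

structure IsDiagonalSubgroupFunctor
    (ι : ∀ (R : Type) (_ : CommRing R) (_ : Algebra k R), (A →ₐ[k] R) → GL (Fin 2) R) : Prop where
  map_comp {R S : Type} [CommRing R] [CommRing S] [Algebra k R] [Algebra k S] (f : R →ₐ[k] S)
    (x : A →ₐ[k] R) : ι S _ _ (f.comp x) = map f.toRingHom (ι R _ _ x)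
  range_eq_subgroup (R : Type) [CommRing R] [Algebra k R] :
    ∃ H : Subgroup (GL (Fin 2) R), Set.range (ι R inferInstance inferInstance) = H
  isDiag {R : Type} [CommRing R] [Algebra k R] (x : A →ₐ[k] R) :
    ((ι R _ _ x : GL (Fin 2) R) : Matrix (Fin 2) (Fin 2) R).IsDiag
  eq_one_of_mem_scalarSubgroup {R : Type} [CommRing R] [Algebra k R] (x : A →ₐ[k] R) :
    ι R _ _ x ∈ scalarSubgroup R → ι R _ _ x = 1

def universalPoint
    (ι : ∀ (R : Type) (_ : CommRing R) (_ : Algebra k R), (A →ₐ[k] R) → GL (Fin 2) R) :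
    GL (Fin 2) A :=
  ι A _ _ (AlgHom.id k A)

def Normalizes (ι : ∀ (R : Type) (_ : CommRing R) (_ : Algebra k R), (A →ₐ[k] R) → GL (Fin 2) R)
    {R : Type} [CommRing R] [Algebra k R] (g : GL (Fin 2) R) : Prop :=
  ∀ (S : Type) (iS : CommRing S) (aS : Algebra k S) (f : R →ₐ[k] S) (x : A →ₐ[k] S),
    map f.toRingHom g * ι S iS aS x * (map f.toRingHom g)⁻¹ ∈ Set.range (ι S iS aS)

namespace IsDiagonalSubgroupFunctor

variable {ι : ∀ (R : Type) (_ : CommRing R) (_ : Algebra k R), (A →ₐ[k] R) → GL (Fin 2) R}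
  (hG : IsDiagonalSubgroupFunctor ι)
include hG

theorem point_apply {S : Type} [CommRing S] [Algebra k S] (x : A →ₐ[k] S) (i j : Fin 2) :
    ι S _ _ x i j = x (universalPoint ι i j) := by
  have h := hG.map_comp x (AlgHom.id k A)
  rw [AlgHom.comp_id] at h
  rw [h]
  rfl

theorem exists_range_eq_subgroup (S : Type) [CommRing S] [Algebra k S] :
    ∃ H : Subgroup (GL (Fin 2) S), Set.range (ι S inferInstance inferInstance) = H ∧
      ∀ x : A →ₐ[k] S, ι S _ _ x ∈ H := by
  obtain ⟨H, hH⟩ := hG.range_eq_subgroup S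
  exact ⟨H, hH, fun x => by rw [← SetLike.mem_coe, ← hH]; exact ⟨x, rfl⟩⟩

theorem mul_mem_range {S : Type} [CommRing S] [Algebra k S] (x y : A →ₐ[k] S) :
    ι S _ _ x * ι S _ _ y ∈ Set.range (ι S inferInstance inferInstance) := by
  obtain ⟨H, hH, hmem⟩ := hG.exists_range_eq_subgroup S
  rw [hH]
  exact H.mul_mem (hmem x) (hmem y)

theorem inv_mem_range {S : Type} [CommRing S] [Algebra k S] (x : A →ₐ[k] S) :
    (ι S _ _ x)⁻¹ ∈ Set.range (ι S inferInstance inferInstance) := by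
  obtain ⟨H, hH, hmem⟩ := hG.exists_range_eq_subgroup S
  rw [hH]
  exact H.inv_mem (hmem x)

theorem universalPoint_apply_ne
    (hnontriv : ∃ (R : Type) (iR : CommRing R) (aR : Algebra k R) (x : A →ₐ[k] R),
      ι R iR aR x ≠ 1) :
    universalPoint ι 0 0 ≠ universalPoint ι 1 1 := by
  obtain ⟨R, _, _, x, hx⟩ := hnontriv
  refine fun h => hx (hG.eq_one_of_mem_scalarSubgroup x (mem_scalarSubgroup (hG.isDiag x) ?_))
  rw [hG.point_apply, hG.point_apply, h]

theorem universalPoint_mul_eq_one {R : Type} [CommRing R] [Algebra k R] {g : GL (Fin 2) R}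
    (hg : Normalizes ι g) {R' : Type} [CommRing R'] [Algebra k R'] [Nontrivial R']
    (f : R →ₐ[k] R') (hf : IsUnit (f (g 0 1)) ∨ IsUnit (f (g 1 0))) :
    universalPoint ι 0 0 * universalPoint ι 1 1 = 1 := by
  set j := (includeLeft : R' →ₐ[k] R' ⊗[k] A)
  set x : A →ₐ[k] R' ⊗[k] A := includeRight
  obtain ⟨y, hy⟩ := hg (R' ⊗[k] A) inferInstance inferInstance (j.comp f) x
  obtain ⟨h00, h11⟩ :=
    conj_apply_eq_swap (hG.isDiag x) (hy ▸ hG.isDiag y) (hf.imp (·.map j) (·.map j))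
  obtain ⟨z, hz⟩ := hG.mul_mem_range x y
  have hz00 : ι _ _ _ z 0 0 = ι _ _ _ x 0 0 * ι _ _ _ x 1 1 := by
    rw [hz, Units.val_mul, isDiag_mul_apply (hG.isDiag x), hy, h00]
  have hz11 : ι _ _ _ z 1 1 = ι _ _ _ x 0 0 * ι _ _ _ x 1 1 := by
    rw [hz, Units.val_mul, isDiag_mul_apply (hG.isDiag x), hy, h11, mul_comm]
  have hz1 := hG.eq_one_of_mem_scalarSubgroup z
    (mem_scalarSubgroup (hG.isDiag z) (hz00.trans hz11.symm))
  apply includeRight_injective (A := R') (algebraMap k R').injective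
  rw [map_mul, map_one, ← hG.point_apply x, ← hG.point_apply x, ← hz00, hz1]
  rfl

theorem swapGL_conj_mem_range (h : universalPoint ι 0 0 * universalPoint ι 1 1 = 1)
    {S : Type} [CommRing S] [Algebra k S] (x : A →ₐ[k] S) :
    swapGL S * ι S _ _ x * (swapGL S)⁻¹ ∈ Set.range (ι S inferInstance inferInstance) := by
  rw [swapGL_conj (hG.isDiag x) (by rw [hG.point_apply, hG.point_apply, ← map_mul, h, map_one])]
  exact hG.inv_mem_range x

theorem isDiag_or_diag_eq_zero_of_normalizes (hne : universalPoint ι 0 0 ≠ universalPoint ι 1 1)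
    {R : Type} [Field R] [Algebra k R] {g : GL (Fin 2) R} (hg : Normalizes ι g) :
    (g : Matrix (Fin 2) (Fin 2) R).IsDiag ∨ ∀ i, g i i = 0 := by
  by_cases hdiag : (g : Matrix (Fin 2) (Fin 2) R).IsDiag
  · exact Or.inl hdiag
  right
  have hunit : IsUnit (g 0 1) ∨ IsUnit (g 1 0) := by
    rw [isDiag_fin_two_iff, not_and_or] at hdiag
    simpa only [isUnit_iff_ne_zero] using hdiag
  set f := (includeLeft : R →ₐ[k] R ⊗[k] A)
  set x : A →ₐ[k] R ⊗[k] A := includeRight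
  obtain ⟨y, hy⟩ := hg (R ⊗[k] A) inferInstance inferInstance f x
  have hY := hy ▸ hG.isDiag y
  obtain ⟨h00, h11⟩ := conj_apply_eq_swap (hG.isDiag x) hY (hunit.imp (·.map f) (·.map f))
  have hxne : ι _ _ _ x 0 0 ≠ ι _ _ _ x 1 1 := by
    rw [hG.point_apply, hG.point_apply]
    exact (includeRight_injective (A := R) (algebraMap k R).injective).ne hne
  have hself {i : Fin 2} (hgi : g i i ≠ 0) :=
    conj_apply_self_of_isUnit _ _ (hG.isDiag x) hY ((Ne.isUnit hgi).map f)
  exact Fin.forall_fin_two.mpr ⟨not_not.mp fun h => hxne ((hself h).symm.trans h00),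
    not_not.mp fun h => hxne ((hself h).symm.trans h11).symm⟩

theorem isDiag_of_normalizes (hne : universalPoint ι 0 0 ≠ universalPoint ι 1 1)
    (hprod : universalPoint ι 0 0 * universalPoint ι 1 1 ≠ 1)
    {R : Type} [CommRing R] [Algebra k R] {g : GL (Fin 2) R} (hg : Normalizes ι g) :
    (g : Matrix (Fin 2) (Fin 2) R).IsDiag := by
  have hnil : IsNilpotent (g 0 1) := by
    by_contra hnil
    obtain ⟨R', _, _, _, f, hf⟩ := exists_algHom_isUnit_of_not_isNilpotent (k := k) hnil
    exact hprod (hG.universalPoint_mul_eq_one hg f (Or.inl hf))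
  obtain ⟨h00, h11⟩ := isUnit_apply_self_of_isNilpotent hnil
  set f := (includeLeft : R →ₐ[k] R ⊗[k] A)
  set x : A →ₐ[k] R ⊗[k] A := includeRight
  obtain ⟨y, hy⟩ := hg (R ⊗[k] A) inferInstance inferInstance f x
  have hvanish {i j : Fin 2} (hi : IsUnit (g i i))
      (hij : universalPoint ι i i ≠ universalPoint ι j j) : g i j = 0 := by
    have h := mul_apply_sub_eq_zero_of_isUnit _ _ (hG.isDiag x) (hy ▸ hG.isDiag y) (hi.map f) j
    rw [GeneralLinearGroup.map_apply, hG.point_apply, hG.point_apply, ← map_sub] at h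
    refine TensorProduct.eq_zero_of_tmul_eq_zero (k := k) (sub_ne_zero.mpr hij) ?_
    simpa [f, x, tmul_mul_tmul] using h
  exact isDiag_fin_two_iff.mpr ⟨hvanish h00 hne, hvanish h11 hne.symm⟩

end IsDiagonalSubgroupFunctor

end GroupFunctor

theorem stmt10_general (k : Type) [Field k]
    (A : Type) [CommRing A] [Algebra k A]
    -- the subgroup scheme `G ⊆ GL₂` on points, natural, injective, with subgroup image
    (ι : ∀ (R : Type) (_ : CommRing R) (_ : Algebra k R), (A →ₐ[k] R) → GL (Fin 2) R)
    (hnat : ∀ (R S : Type) (iR : CommRing R) (iS : CommRing S) (aR : Algebra k R)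
      (aS : Algebra k S) (f : R →ₐ[k] S) (x : A →ₐ[k] R),
      ι S iS aS (f.comp x) = Matrix.GeneralLinearGroup.map f.toRingHom (ι R iR aR x))
    (hsub : ∀ (R : Type) (iR : CommRing R) (aR : Algebra k R),
      ∃ H : Subgroup (GL (Fin 2) R), Set.range (ι R iR aR) = (H : Set (GL (Fin 2) R)))
    -- the identity point of `G` is given by the counit `ε`
    (ε : A →ₐ[k] k)
    (hε : ∀ (R : Type) (iR : CommRing R) (aR : Algebra k R),
      ι R iR aR ((Algebra.ofId k R).comp ε) = 1)
    -- `G` is contained in the diagonal torus `T'`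
    (hdiag : ∀ (R : Type) (iR : CommRing R) (aR : Algebra k R) (x : A →ₐ[k] R)
      (i j : Fin 2), i ≠ j → ((ι R iR aR x : GL (Fin 2) R) : Matrix (Fin 2) (Fin 2) R) i j = 0)
    -- `G ∩ Z(GL₂) = {1}`
    (hcenter : ∀ (R : Type) (iR : CommRing R) (aR : Algebra k R) (x : A →ₐ[k] R),
      ι R iR aR x ∈ scalarSubgroup R → x = (Algebra.ofId k R).comp ε)
    -- `G` is nontrivial
    (hnontriv : ∃ (R : Type) (iR : CommRing R) (aR : Algebra k R) (x : A →ₐ[k] R),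
      ι R iR aR x ≠ 1) :
    -- normalizer over any field extension: diagonal or antidiagonal
    (∀ (R : Type) (iR : Field R) (aR : Algebra k R) (g : GL (Fin 2) R),
      (∀ (S : Type) (iS : CommRing S) (aS : Algebra k S) (f : R →ₐ[k] S) (x : A →ₐ[k] S),
        (Matrix.GeneralLinearGroup.map f.toRingHom g) * ι S iS aS x *
          (Matrix.GeneralLinearGroup.map f.toRingHom g)⁻¹ ∈ Set.range (ι S iS aS)) →
      ((∀ i j : Fin 2, i ≠ j → ((g : GL (Fin 2) R) : Matrix (Fin 2) (Fin 2) R) i j = 0) ∨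
        (∀ i : Fin 2, ((g : GL (Fin 2) R) : Matrix (Fin 2) (Fin 2) R) i i = 0))) ∧
    -- in particular: if `G` is not stable under the swap, the normalizer is exactly `T'`
    ((∃ (R : Type) (iR : CommRing R) (aR : Algebra k R) (x : A →ₐ[k] R),
        swapGL R * ι R iR aR x * (swapGL R)⁻¹ ∉ Set.range (ι R iR aR)) →
      ∀ (R : Type) (iR : CommRing R) (aR : Algebra k R) (g : GL (Fin 2) R),
        (∀ (S : Type) (iS : CommRing S) (aS : Algebra k S) (f : R →ₐ[k] S) (x : A →ₐ[k] S),
          (Matrix.GeneralLinearGroup.map f.toRingHom g) * ι S iS aS x *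
            (Matrix.GeneralLinearGroup.map f.toRingHom g)⁻¹ ∈ Set.range (ι S iS aS)) →
        ∀ i j : Fin 2, i ≠ j →
          ((g : GL (Fin 2) R) : Matrix (Fin 2) (Fin 2) R) i j = 0) := by
  have hG : IsDiagonalSubgroupFunctor ι :=
    { map_comp := fun f x => hnat _ _ _ _ _ _ f x
      range_eq_subgroup := fun R _ _ => hsub R _ _
      isDiag := fun x => hdiag _ _ _ x
      eq_one_of_mem_scalarSubgroup := fun x hx => by rw [hcenter _ _ _ x hx]; exact hε _ _ _ }
  have hne := hG.universalPoint_apply_ne hnontriv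
  refine ⟨fun R _ _ g hg => hG.isDiag_or_diag_eq_zero_of_normalizes hne hg, ?_⟩
  rintro ⟨R₀, _, _, x₀, hx₀⟩ R _ _ g hg
  exact hG.isDiag_of_normalizes hne (fun h => hx₀ (hG.swapGL_conj_mem_range h x₀)) hg

/-- let `k` be a field and `G` a nontrivial finite commutative group scheme
over `k` of multiplicative type with cyclic Cartier dual (a form of `μ_n`), embedded as a
closed subgroup scheme of the diagonal torus `T' ⊆ GL₂` with trivial intersection with the
centre of `GL₂`.  Then the normalizer of `G` in `GL₂` consists of the diagonal torus
together with possibly the coordinate swap; in particular, if `G` is not stable under the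
coordinate swap then the normalizer of `G` in `GL₂` is exactly `T'`. -/
theorem stmt10 (k : Type) [Field k]
    (A : Type) [CommRing A] [Algebra k A] [FiniteDimensional k A]
    -- the subgroup scheme `G ⊆ GL₂` on points, natural, injective, with subgroup image
    (ι : ∀ (R : Type) (_ : CommRing R) (_ : Algebra k R), (A →ₐ[k] R) → GL (Fin 2) R)
    (hnat : ∀ (R S : Type) (iR : CommRing R) (iS : CommRing S) (aR : Algebra k R)
      (aS : Algebra k S) (f : R →ₐ[k] S) (x : A →ₐ[k] R),
      ι S iS aS (f.comp x) = Matrix.GeneralLinearGroup.map f.toRingHom (ι R iR aR x))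
    (hinj : ∀ (R : Type) (iR : CommRing R) (aR : Algebra k R),
      Function.Injective (ι R iR aR))
    (hsub : ∀ (R : Type) (iR : CommRing R) (aR : Algebra k R),
      ∃ H : Subgroup (GL (Fin 2) R), Set.range (ι R iR aR) = (H : Set (GL (Fin 2) R)))
    -- the identity point of `G` is given by the counit `ε`
    (ε : A →ₐ[k] k)
    (hε : ∀ (R : Type) (iR : CommRing R) (aR : Algebra k R),
      ι R iR aR ((Algebra.ofId k R).comp ε) = 1)
    -- `G` is contained in the diagonal torus `T'`
    (hdiag : ∀ (R : Type) (iR : CommRing R) (aR : Algebra k R) (x : A →ₐ[k] R)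
      (i j : Fin 2), i ≠ j → ((ι R iR aR x : GL (Fin 2) R) : Matrix (Fin 2) (Fin 2) R) i j = 0)
    -- `G ∩ Z(GL₂) = {1}`
    (hcenter : ∀ (R : Type) (iR : CommRing R) (aR : Algebra k R) (x : A →ₐ[k] R),
      ι R iR aR x ∈ scalarSubgroup R → x = (Algebra.ofId k R).comp ε)
    -- `G` is nontrivial
    (hnontriv : ∃ (R : Type) (iR : CommRing R) (aR : Algebra k R) (x : A →ₐ[k] R),
      ι R iR aR x ≠ 1)
    -- `G` is a form of `μ_n`: over some field extension `K` it becomes the group scheme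
    -- of `n`-th roots of unity
    (hmu : ∃ (K : Type) (_ : Field K) (_ : Algebra k K) (n : ℕ) (_ : 0 < n),
      ∀ (S : Type) (iS : CommRing S) (KS : Algebra K S) (aS : Algebra k S)
        (_ : IsScalarTower k K S),
        ∃ e : (A →ₐ[k] S) ≃ {x : Sˣ // x ^ n = 1},
          ∀ x y z : A →ₐ[k] S, ι S iS aS z = ι S iS aS x * ι S iS aS y →
            ((e z : Sˣ) : S) = ((e x : Sˣ) : S) * ((e y : Sˣ) : S)) :
    -- normalizer over any field extension: diagonal or antidiagonal
    (∀ (R : Type) (iR : Field R) (aR : Algebra k R) (g : GL (Fin 2) R),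
      (∀ (S : Type) (iS : CommRing S) (aS : Algebra k S) (f : R →ₐ[k] S) (x : A →ₐ[k] S),
        (Matrix.GeneralLinearGroup.map f.toRingHom g) * ι S iS aS x *
          (Matrix.GeneralLinearGroup.map f.toRingHom g)⁻¹ ∈ Set.range (ι S iS aS)) →
      ((∀ i j : Fin 2, i ≠ j → ((g : GL (Fin 2) R) : Matrix (Fin 2) (Fin 2) R) i j = 0) ∨
        (∀ i : Fin 2, ((g : GL (Fin 2) R) : Matrix (Fin 2) (Fin 2) R) i i = 0))) ∧
    -- in particular: if `G` is not stable under the swap, the normalizer is exactly `T'`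
    ((∃ (R : Type) (iR : CommRing R) (aR : Algebra k R) (x : A →ₐ[k] R),
        swapGL R * ι R iR aR x * (swapGL R)⁻¹ ∉ Set.range (ι R iR aR)) →
      ∀ (R : Type) (iR : CommRing R) (aR : Algebra k R) (g : GL (Fin 2) R),
        (∀ (S : Type) (iS : CommRing S) (aS : Algebra k S) (f : R →ₐ[k] S) (x : A →ₐ[k] S),
          (Matrix.GeneralLinearGroup.map f.toRingHom g) * ι S iS aS x *
            (Matrix.GeneralLinearGroup.map f.toRingHom g)⁻¹ ∈ Set.range (ι S iS aS)) →
        ∀ i j : Fin 2, i ≠ j →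
          ((g : GL (Fin 2) R) : Matrix (Fin 2) (Fin 2) R) i j = 0) :=
  stmt10_general k A ι hnat hsub ε hε hdiag hcenter hnontriv
end

section
/- Over a field k of characteristic p > 0, every finite subgroup scheme of the additive group 𝔾_a that is infinitesimal (i.e., connected) is equal to α_{p^n} = Spec k[x]/(x^{p^n}) (the kernel of the n-th power of Frobenius on 𝔾_a) for some n ≥ 0. -/
open Polynomial TensorProduct

/-- The comultiplication of the additive group scheme `𝔾ₐ = Spec k[X]`:
`Δ(X) = X ⊗ 1 + 1 ⊗ X`. -/
noncomputable def GaComul (k : Type*) [CommRing k] :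
    Polynomial k →ₐ[k] Polynomial k ⊗[k] Polynomial k :=
  aeval ((X : Polynomial k) ⊗ₜ 1 + 1 ⊗ₜ (X : Polynomial k))

/-- The counit of `𝔾ₐ`: evaluation at `0`. -/
noncomputable def GaCounit (k : Type*) [CommRing k] : Polynomial k →ₐ[k] k :=
  aeval (0 : k)

/-- The antipode of `𝔾ₐ`: `X ↦ -X`. -/
noncomputable def GaAntipode (k : Type*) [CommRing k] : Polynomial k →ₐ[k] Polynomial k :=
  aeval (-(X : Polynomial k))

/-!
Since `k[X]/I` is a finite local `k`-algebra with residue field `k`, it is Artinian, so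
`(X - c)^m ∈ I` for some `c ∈ k`; the counit forces `c = 0`, and then `I = (X^d)` as `k[X]` is a
principal ideal domain. That `(X^d)` is a Hopf ideal means `(X ⊗ 1 + 1 ⊗ X)^d` lies in
`(X^d ⊗ 1, 1 ⊗ X^d)`, which forces `d.choose i = 0` in `k` for `0 < i < d`. Writing `d = p^n e` with
`p ∤ e`, Frobenius gives `(X + 1)^d = (X^{p^n} + 1)^e`, so `d.choose (p^n) = e ≠ 0` unless
`e = 1`.
-/

theorem IsLocalRing.exists_isNilpotent_sub_algebraMap {k A : Type*} [Field k] [CommRing A]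
    [Algebra k A] [FiniteDimensional k A] [IsLocalRing A]
    (hres : Function.Surjective (IsLocalRing.residue A ∘ algebraMap k A)) (a : A) :
    ∃ c : k, IsNilpotent (a - algebraMap k A c) := by
  have := IsArtinianRing.of_finite k A
  obtain ⟨c, hc⟩ := hres (IsLocalRing.residue A a)
  refine ⟨c, Ring.KrullDimLE.isNilpotent_iff_mem_maximalIdeal.mpr ?_⟩
  rw [← IsLocalRing.residue_eq_zero_iff, map_sub, ← hc, Function.comp_apply, sub_self]

theorem eq_zero_of_X_sub_C_pow_mem {k : Type*} [CommRing k] [IsReduced k] {I : Ideal k[X]}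
    (hcounit : ∀ a ∈ I, GaCounit k a = 0) {c : k} {m : ℕ} (h : (X - C c) ^ m ∈ I) : c = 0 := by
  have := hcounit _ h
  simp only [GaCounit, map_pow, map_sub, aeval_X, aeval_C, Algebra.algebraMap_self_apply,
    zero_sub] at this
  exact neg_eq_zero.mp (eq_zero_of_pow_eq_zero this)

theorem Ideal.exists_eq_span_X_pow_of_X_pow_mem {k : Type*} [Field k] {I : Ideal k[X]}
    {m : ℕ} (h : X ^ m ∈ I) : ∃ d, I = Ideal.span {X ^ d} := by
  obtain ⟨f, rfl⟩ := Submodule.IsPrincipal.principal I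
  rw [Ideal.submodule_span_eq, Ideal.mem_span_singleton] at h
  obtain ⟨d, -, hd⟩ := (dvd_prime_pow prime_X m).mp h
  exact ⟨d, Ideal.span_singleton_eq_span_singleton.mpr hd⟩

theorem cast_choose_eq_zero_of_gaComul_mem {k : Type*} [CommRing k] {d i : ℕ}
    (h : GaComul k (X ^ d) ∈
      (Ideal.span {X ^ d}).map (Algebra.TensorProduct.includeLeft :
          k[X] →ₐ[k] k[X] ⊗[k] k[X]).toRingHom ⊔
      (Ideal.span {X ^ d}).map (Algebra.TensorProduct.includeRight :
          k[X] →ₐ[k] k[X] ⊗[k] k[X]).toRingHom)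
    (hi : 0 < i) (hid : i < d) : (d.choose i : k) = 0 := by
  -- Identify `k[X] ⊗ k[X]` with `k[X][Y]`, the first factor becoming the coefficients:
  -- then `Δ (X ^ d) = (Y + X) ^ d`, whose `Y ^ i * X ^ (d - i)` coefficient is `d.choose i`,
  -- while every monomial of an element of `(X ^ d, Y ^ d)` is divisible by `X ^ d` or `Y ^ d`.
  let ψ : k[X] ⊗[k] k[X] →ₐ[k] k[X][X] :=
    Algebra.TensorProduct.productMap (aeval (C X)) (aeval X)
  have hψ := Ideal.mem_map_of_mem ψ.toRingHom h
  rw [Ideal.map_sup, Ideal.map_map, Ideal.map_map, Ideal.map_span, Ideal.map_span,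
    Set.image_singleton, Set.image_singleton, ← Ideal.span_union, Set.singleton_union] at hψ
  obtain ⟨u, v, huv⟩ := Ideal.mem_span_pair.mp hψ
  simp only [ψ, GaComul, AlgHom.toRingHom_eq_coe, RingHom.coe_comp, RingHom.coe_coe,
    Function.comp_apply, map_pow, aeval_X, Algebra.TensorProduct.includeLeft_apply,
    Algebra.TensorProduct.includeRight_apply, map_add,
    Algebra.TensorProduct.productMap_apply_tmul, map_one, mul_one, one_mul, add_comm (C X)] at huv
  have hcoeff := congrArg (coeff · (d - i)) (congrArg (coeff · i) huv)
  simp only [← C_pow, coeff_add, coeff_mul_C, coeff_mul_X_pow', if_neg (not_le.mpr hid),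
    coeff_X_add_C_pow, add_zero] at hcoeff
  rwa [if_neg (by omega), mul_comm, ← C_eq_natCast, coeff_C_mul_X_pow, if_pos rfl, eq_comm]
    at hcoeff

theorem Nat.cast_choose_prime_pow_mul (k : Type*) [CommRing k] (p : ℕ) [Fact p.Prime] [CharP k p]
    (n e : ℕ) : ((p ^ n * e).choose (p ^ n) : k) = e := by
  have hexpand : ((X + 1 : k[X])) ^ (p ^ n * e) = expand k (p ^ n) ((X + 1) ^ e) := by
    rw [pow_mul, add_pow_char_pow, one_pow, map_pow, map_add, expand_X, map_one]
  have := congrArg (coeff · (p ^ n * 1)) hexpand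
  rwa [coeff_expand_mul' (pow_pos (Fact.out : p.Prime).pos n), coeff_X_add_one_pow,
    coeff_X_add_one_pow, mul_one, Nat.choose_one_right] at this

theorem exists_eq_pow_of_cast_choose_eq_zero (k : Type*) [CommRing k] (p : ℕ) [Fact p.Prime]
    [CharP k p] {d : ℕ} (hd : d ≠ 0) (h : ∀ i, 0 < i → i < d → (d.choose i : k) = 0) :
    ∃ n, d = p ^ n := by
  have hp := (Fact.out : p.Prime)
  obtain ⟨n, e, hpe, rfl⟩ := Nat.exists_eq_pow_mul_and_not_dvd hd p hp.ne_one
  refine ⟨n, ?_⟩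
  by_contra hne
  have he : 1 < e := Nat.one_lt_iff_ne_zero_and_ne_one.mpr
    ⟨by rintro rfl; simp at hd, by rintro rfl; simp at hne⟩
  have := h (p ^ n) (pow_pos hp.pos n) (lt_mul_of_one_lt_right (pow_pos hp.pos n) he)
  rw [Nat.cast_choose_prime_pow_mul, CharP.cast_eq_zero_iff k p] at this
  exact hpe this

theorem stmt11_general (k : Type*) [Field k] (p : ℕ) [Fact p.Prime] [CharP k p]
    (I : Ideal (Polynomial k))
    -- `I` is a Hopf ideal:
    (hcomul : ∀ a ∈ I, GaComul k a ∈
      I.map (Algebra.TensorProduct.includeLeft :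
          Polynomial k →ₐ[k] Polynomial k ⊗[k] Polynomial k).toRingHom ⊔
      I.map (Algebra.TensorProduct.includeRight :
          Polynomial k →ₐ[k] Polynomial k ⊗[k] Polynomial k).toRingHom)
    (hcounit : ∀ a ∈ I, GaCounit k a = 0)
    -- the subgroup scheme is finite:
    (hfin : FiniteDimensional k (Polynomial k ⧸ I))
    -- and infinitesimal (connected, one point with residue field `k`):
    (hconn : IsLocalRing (Polynomial k ⧸ I))
    (hres : Function.Bijective
      (IsLocalRing.residue (Polynomial k ⧸ I) ∘ algebraMap k (Polynomial k ⧸ I))) :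
    ∃ n : ℕ, I = Ideal.span {(X : Polynomial k) ^ p ^ n} := by
  obtain ⟨c, m, hm⟩ :=
    IsLocalRing.exists_isNilpotent_sub_algebraMap hres.2 (Ideal.Quotient.mk I X)
  rw [← Ideal.Quotient.mk_algebraMap, Polynomial.algebraMap_eq, ← map_sub, ← map_pow,
    Ideal.Quotient.eq_zero_iff_mem] at hm
  obtain rfl := eq_zero_of_X_sub_C_pow_mem hcounit hm
  rw [C_0, sub_zero] at hm
  obtain ⟨d, rfl⟩ := Ideal.exists_eq_span_X_pow_of_X_pow_mem hm
  have hd : d ≠ 0 := by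
    rintro rfl
    simpa [GaCounit] using hcounit 1 (by simp)
  obtain ⟨n, rfl⟩ := exists_eq_pow_of_cast_choose_eq_zero k p hd fun i hi hid ↦
    cast_choose_eq_zero_of_gaComul_mem (hcomul _ (Ideal.mem_span_singleton_self _)) hi hid
  exact ⟨n, rfl⟩

/-- over a field `k` of characteristic `p > 0`, every infinitesimal
(connected) finite subgroup scheme of `𝔾ₐ` equals `α_{p^n} = Spec k[X]/(X^{p^n})` for some
`n ≥ 0`.  A subgroup scheme of `𝔾ₐ` corresponds to a Hopf ideal `I ⊆ k[X]`; finiteness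
means that `k[X]/I` is finite dimensional, and being infinitesimal means `k[X]/I` is local
with residue field `k` (a single point).  The conclusion is `I = (X^{p^n})`. -/
theorem stmt11 (k : Type*) [Field k] (p : ℕ) [Fact p.Prime] [CharP k p]
    (I : Ideal (Polynomial k))
    -- `I` is a Hopf ideal:
    (hcomul : ∀ a ∈ I, GaComul k a ∈
      I.map (Algebra.TensorProduct.includeLeft :
          Polynomial k →ₐ[k] Polynomial k ⊗[k] Polynomial k).toRingHom ⊔
      I.map (Algebra.TensorProduct.includeRight :
          Polynomial k →ₐ[k] Polynomial k ⊗[k] Polynomial k).toRingHom)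
    (hcounit : ∀ a ∈ I, GaCounit k a = 0)
    (hantipode : ∀ a ∈ I, GaAntipode k a ∈ I)
    -- the subgroup scheme is finite:
    (hfin : FiniteDimensional k (Polynomial k ⧸ I))
    -- and infinitesimal (connected, one point with residue field `k`):
    (hconn : IsLocalRing (Polynomial k ⧸ I))
    (hres : Function.Bijective
      (IsLocalRing.residue (Polynomial k ⧸ I) ∘ algebraMap k (Polynomial k ⧸ I))) :
    ∃ n : ℕ, I = Ideal.span {(X : Polynomial k) ^ p ^ n} :=
  stmt11_general k p I hcomul hcounit hfin hconn hres
end
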